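/- arXiv:2406.03037 — 2 statements merged into one kernel-verified Lean document; each statement's English description precedes it below -/
import Mathlib

section
/- For any $\mu, \lambda > 0$, a Poisson random variable with mean $\mu$ is stochastically dominated by $\lceil \mu e^{\lambda} \rceil + E$ where $E$ is an exponential random variable with rate $\lambda$. That is, for all $x \ge 0$, $\mathbb{P}(\mathrm{Pois}(\mu) > x) \le \mathbb{P}(\lceil \mu e^{\lambda} \rceil + \mathrm{Exp}(\lambda) > x)$. -/
open MeasureTheory ProbabilityTheory Real
open scoped NNReal ENNReal

/-! Chernoff's bound with tilt `λ` gives `ℙ(Pois(μ) ≥ x) ≤ exp (μ (e^λ - 1) - λ x)`. Since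
`e^λ - 1 ≤ λ e^λ`, the exponent is at most `λ (M - x)` with `M = ⌈μ e^λ⌉`, and `e^{-λ (x - M)}`
is exactly the tail of `M + Exp(λ)` beyond `x ≥ M`; for `x < M` that tail is `1`. -/

open Set

lemma Real.exp_sub_one_le_mul_exp (x : ℝ) : exp x - 1 ≤ x * exp x := by
  have h := one_sub_le_exp_neg x
  have hx := exp_pos x
  have : exp (-x) * exp x = 1 := by rw [← exp_add, neg_add_cancel, exp_zero]
  nlinarith

namespace ProbabilityTheory

lemma expMeasure_real_Ioi {r : ℝ} (hr : 0 < r) (a : ℝ) :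
    (expMeasure r).real (Ioi a) = min 1 (exp (-(r * a))) := by
  have := isProbabilityMeasure_expMeasure hr
  rw [← compl_Iic, measureReal_compl measurableSet_Iic, probReal_univ, ← cdf_eq_real,
    cdf_expMeasure_eq hr]
  split_ifs with ha
  · rw [min_eq_right (exp_le_one_iff.2 (by nlinarith))]
    ring
  · rw [min_eq_left (one_le_exp_iff.2 (by nlinarith))]
    ring

lemma hasSum_exp_mul_poissonMeasure (r : ℝ≥0) (t : ℝ) :
    HasSum (fun n : ℕ ↦ exp (-r) * r ^ n / n.factorial * exp (t * n))
      (exp (r * (exp t - 1))) := by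
  have hterm : (fun n : ℕ ↦ exp (-r) * r ^ n / n.factorial * exp (t * n))
      = fun n ↦ exp (-r) * ((r * exp t) ^ n / n.factorial) := by
    ext n
    rw [mul_pow, ← exp_nat_mul, mul_comm (n : ℝ) t]
    ring
  have h := NormedSpace.expSeries_div_hasSum_exp (𝔸 := ℝ) (r * exp t)
  rw [← exp_eq_exp_ℝ] at h
  rw [hterm, show (r : ℝ) * (exp t - 1) = -r + r * exp t by ring, exp_add]
  exact h.mul_left _

lemma integrable_exp_mul_poissonMeasure (r : ℝ≥0) (t : ℝ) :
    Integrable (fun n : ℕ ↦ exp (t * n)) (poissonMeasure r) := by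
  rw [integrable_poissonMeasure_iff]
  simpa only [norm_of_nonneg (exp_pos _).le] using (hasSum_exp_mul_poissonMeasure r t).summable

lemma mgf_poissonMeasure (r : ℝ≥0) (t : ℝ) :
    mgf (fun n : ℕ ↦ (n : ℝ)) (poissonMeasure r) t = exp (r * (exp t - 1)) := by
  rw [mgf, integral_poissonMeasure]
  exact (hasSum_exp_mul_poissonMeasure r t).tsum_eq

lemma poissonMeasure_real_ge_le_exp (r : ℝ≥0) {t : ℝ} (ht : 0 ≤ t) (x : ℝ) :
    (poissonMeasure r).real {n | x ≤ n} ≤ exp (r * (exp t - 1) - t * x) := by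
  calc (poissonMeasure r).real {n | x ≤ n}
      ≤ exp (-t * x) * mgf (fun n : ℕ ↦ (n : ℝ)) (poissonMeasure r) t :=
        measure_ge_le_exp_mul_mgf x ht (integrable_exp_mul_poissonMeasure r t)
    _ = exp (r * (exp t - 1) - t * x) := by
        rw [mgf_poissonMeasure, ← exp_add]
        ring_nf

end ProbabilityTheory

theorem stmt_1_general (μ : ℝ≥0) (l : ℝ) (hl : 0 < l) :
    ∀ x : ℝ, 0 ≤ x →
      poissonMeasure μ {n : ℕ | x < (n : ℝ)}
        ≤ expMeasure l {t : ℝ | x < (⌈(μ : ℝ) * Real.exp l⌉ : ℝ) + t} := by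
  intro x _
  set M : ℝ := (⌈(μ : ℝ) * exp l⌉ : ℝ)
  have := isProbabilityMeasure_expMeasure hl
  have hshift : {t : ℝ | x < M + t} = Ioi (x - M) := by
    ext t; simp [sub_lt_iff_lt_add']
  have hmean : μ * (exp l - 1) ≤ l * M := calc
    μ * (exp l - 1) ≤ μ * (l * exp l) := by gcongr; exact exp_sub_one_le_mul_exp l
    _ = l * (μ * exp l) := by ring
    _ ≤ l * M := by gcongr; exact Int.le_ceil _
  rw [hshift, ← ENNReal.toReal_le_toReal (measure_ne_top _ _) (measure_ne_top _ _)]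
  change (poissonMeasure μ).real _ ≤ (expMeasure l).real _
  rw [expMeasure_real_Ioi hl]
  refine le_min measureReal_le_one ?_
  calc (poissonMeasure μ).real {n : ℕ | x < n}
      ≤ (poissonMeasure μ).real {n : ℕ | x ≤ n} := measureReal_mono fun _ ↦ le_of_lt (α := ℝ)
    _ ≤ exp (μ * (exp l - 1) - l * x) := poissonMeasure_real_ge_le_exp μ hl.le x
    _ ≤ exp (-(l * (x - M))) := exp_le_exp.2 (by linarith)

/-- For any `μ, λ > 0`, `Pois(μ) ⪯ ⌈μ e^λ⌉ + Exp(λ)`: for all `x ≥ 0`,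
`ℙ(Pois(μ) > x) ≤ ℙ(⌈μ e^λ⌉ + Exp(λ) > x)`. -/
theorem stmt_1 (μ : ℝ≥0) (l : ℝ) (hμ : 0 < μ) (hl : 0 < l) :
    ∀ x : ℝ, 0 ≤ x →
      poissonMeasure μ {n : ℕ | x < (n : ℝ)}
        ≤ expMeasure l {t : ℝ | x < (⌈(μ : ℝ) * Real.exp l⌉ : ℝ) + t} :=
  stmt_1_general μ l hl
end

section
/- Let $X_1, \dots, X_k$ be i.i.d. uniform random variables on $\{1,\dots,N\}$ with $\sqrt{N} \le k \le N$, and let $X$ be the number of sites in $\{1,\dots,N\}$ occupied by at least two of the $X_i$. Then $\mathbb{P}\left(X \ge \frac{k^2}{6N}\right) \ge \frac{1}{73}$ for all sufficiently large $N$. -/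
open Finset Real

/-- The number of sites of `[N]` occupied by at least two of `ω : Fin k → Fin N`. -/
def multiplyOccupied (N k : ℕ) (ω : Fin k → Fin N) : ℕ :=
  (Finset.univ.filter fun u : Fin N =>
    2 ≤ (Finset.univ.filter fun i : Fin k => ω i = u).card).card

/-!
Let `Y ≤ X` count the sites hit by exactly two labels. Counting labelings by the fibres of one or
two sites gives `𝔼 Y = C(k,2) (1 - 1/N)^(k-2) / N` and `𝔼 Y² ≤ 𝔼 Y + (𝔼 Y)²`, i.e. `Var Y ≤ 𝔼 Y`.
The one-sided Chebyshev (Cantelli) inequality `(μ - t)² P(Y < t)² ≤ P(Y ≥ t) Var Y` then yields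
`P(Y ≥ t) ≥ 1/73` as soon as `μ ≤ 70 (μ - t)²`, and for `t = k²/(6N)` this holds because
`(1 - 1/N)^(k-2)` is at least `7/8` when `8k ≤ N` and at least `1/e` always.
-/

theorem two_mul_choose_two (n : ℕ) : 2 * n.choose 2 = n * (n - 1) := by
  rw [Nat.choose_two_right, Nat.mul_div_cancel' (Nat.even_mul_pred_self n).two_dvd]

theorem pow_three_mul_choose_two_le {k N : ℕ} (hkN : k ≤ N) :
    N ^ 3 * (k - 2).choose 2 ≤ k.choose 2 * (N - 1) ^ 3 := by
  rcases lt_or_ge k 4 with hk | hk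
  · rw [Nat.choose_eq_zero_of_lt (by omega : k - 2 < 2), mul_zero]
    exact Nat.zero_le _
  obtain ⟨m, rfl⟩ : ∃ m, k = m + 4 := ⟨k - 4, by omega⟩
  obtain ⟨j, rfl⟩ : ∃ j, N = m + 4 + j := ⟨N - (m + 4), by omega⟩
  have h₁ : 2 * (m + 2).choose 2 = (m + 2) * (m + 1) := two_mul_choose_two _
  have h₂ : 2 * (m + 4).choose 2 = (m + 4) * (m + 3) := two_mul_choose_two _
  simp only [show m + 4 - 2 = m + 2 by omega, show m + 4 + j - 1 = m + 3 + j by omega]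
  refine Nat.le_of_mul_le_mul_left ?_ two_pos
  -- expanded in powers of `j`, twice the difference of the two sides has nonnegative coefficients
  calc 2 * ((m + 4 + j) ^ 3 * (m + 2).choose 2) = (m + 4 + j) ^ 3 * ((m + 2) * (m + 1)) := by
        linear_combination (m + 4 + j) ^ 3 * h₁
    _ ≤ (m + 4 + j) ^ 3 * ((m + 2) * (m + 1)) + ((4 * m + 10) * j ^ 3 +
          3 * (m + 4) * (3 * m + 7) * j ^ 2 + 3 * (m + 4) * (2 * m ^ 2 + 13 * m + 19) * j +
          (m + 4) * (m ^ 3 + 12 * m ^ 2 + 44 * m + 49)) := Nat.le_add_right _ _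
    _ = 2 * ((m + 4).choose 2 * (m + 3 + j) ^ 3) := by
        symm
        linear_combination (m + 3 + j) ^ 3 * h₂

theorem sub_one_mul_pair_count_mul_pow_le {k N : ℕ} (hkN : k ≤ N) :
    (N - 1) * (k.choose 2 * ((k - 2).choose 2 * (N - 2) ^ (k - 4))) * N ^ k ≤
      N * (k.choose 2 * (N - 1) ^ (k - 2)) ^ 2 := by
  rcases lt_or_ge k 4 with hk | hk
  · rw [Nat.choose_eq_zero_of_lt (by omega : k - 2 < 2)]
    simp
  obtain ⟨m, rfl⟩ : ∃ m, k = m + 4 := ⟨k - 4, by omega⟩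
  have hsq : N * (N - 2) ≤ (N - 1) ^ 2 := by
    rcases lt_or_ge N 2 with hN | hN
    · interval_cases N <;> simp
    obtain ⟨n, rfl⟩ : ∃ n, N = n + 2 := ⟨N - 2, by omega⟩
    simp only [show n + 2 - 2 = n by omega, show n + 2 - 1 = n + 1 by omega]
    nlinarith
  have hcube := pow_three_mul_choose_two_le hkN
  simp only [show m + 4 - 4 = m by omega, show m + 4 - 2 = m + 2 by omega] at hcube ⊢
  calc (N - 1) * ((m + 4).choose 2 * ((m + 2).choose 2 * (N - 2) ^ m)) * N ^ (m + 4)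
      = (m + 4).choose 2 * (N ^ 3 * (m + 2).choose 2) * (N * (N - 2)) ^ m * ((N - 1) * N) := by
        ring
    _ ≤ (m + 4).choose 2 * ((m + 4).choose 2 * (N - 1) ^ 3) * ((N - 1) ^ 2) ^ m *
          ((N - 1) * N) := by
        gcongr
    _ = N * ((m + 4).choose 2 * (N - 1) ^ (m + 2)) ^ 2 := by ring

section Occupancy

variable {α β : Type*} [Fintype α] [DecidableEq α] [Fintype β] [DecidableEq β]

theorem card_filter_fiber_eq (u : β) (s : Finset α) :
    #{ω : α → β | ({i | ω i = u} : Finset α) = s} =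
      (Fintype.card β - 1) ^ (Fintype.card α - #s) := by
  have : ({ω : α → β | ({i | ω i = u} : Finset α) = s} : Finset _) =
      Fintype.piFinset fun i => if i ∈ s then {u} else {u}ᶜ := by
    ext ω
    simp only [mem_filter, mem_univ, true_and, Fintype.mem_piFinset, Finset.ext_iff]
    refine forall_congr' fun i => ?_
    split_ifs <;> simp_all
  have hcard (i : α) : #(if i ∈ s then {u} else {u}ᶜ) =
      if i ∈ sᶜ then Fintype.card β - 1 else 1 := by
    split_ifs <;> simp_all [card_compl]
  rw [this, Fintype.card_piFinset, prod_congr rfl fun i _ => hcard i, prod_ite_mem, univ_inter,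
    prod_const, card_compl]

theorem card_filter_fiber_eq_and_fiber_eq {u v : β} (huv : u ≠ v) {s t : Finset α}
    (hst : Disjoint s t) :
    #{ω : α → β | ({i | ω i = u} : Finset α) = s ∧ ({i | ω i = v} : Finset α) = t} =
      (Fintype.card β - 2) ^ (Fintype.card α - #s - #t) := by
  have : ({ω : α → β | ({i | ω i = u} : Finset α) = s ∧ ({i | ω i = v} : Finset α) = t} :
      Finset _) =
      Fintype.piFinset fun i => if i ∈ s then {u} else if i ∈ t then {v} else {u, v}ᶜ := by
    ext ω
    simp only [mem_filter, mem_univ, true_and, Fintype.mem_piFinset, Finset.ext_iff,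
      ← forall_and]
    refine forall_congr' fun i => ?_
    have : i ∈ s → i ∉ t := fun h => disjoint_left.1 hst h
    split_ifs <;> simp_all [huv.symm]
  have hcard (i : α) : #(if i ∈ s then {u} else if i ∈ t then {v} else {u, v}ᶜ) =
      if i ∈ (s ∪ t)ᶜ then Fintype.card β - 2 else 1 := by
    split_ifs <;> simp_all [card_compl, Nat.sub_sub]
  rw [this, Fintype.card_piFinset, prod_congr rfl fun i _ => hcard i, prod_ite_mem, univ_inter,
    prod_const, card_compl, card_union_of_disjoint hst, Nat.sub_sub]

theorem card_filter_card_fiber_eq_two (u : β) :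
    #{ω : α → β | #{i | ω i = u} = 2} =
      (Fintype.card α).choose 2 * (Fintype.card β - 1) ^ (Fintype.card α - 2) := by
  rw [card_eq_sum_card_fiberwise (f := fun ω => ({i | ω i = u} : Finset α))
    (t := powersetCard 2 univ) fun ω hω => by simp_all [mem_powersetCard],
    sum_const_nat (m := ?_), card_powersetCard, card_univ]
  intro s hs
  rw [mem_powersetCard] at hs
  calc #{ω ∈ {ω : α → β | #{i | ω i = u} = 2} | ({i | ω i = u} : Finset α) = s}
      = #{ω : α → β | ({i | ω i = u} : Finset α) = s} := by
        rw [filter_filter]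
        exact congrArg card <| filter_congr fun ω _ => and_iff_right_of_imp fun h => h ▸ hs.2
    _ = _ := by rw [card_filter_fiber_eq, hs.2]

theorem card_filter_card_fiber_eq_two_and_card_fiber_eq_two {u v : β} (huv : u ≠ v) :
    #{ω : α → β | #{i | ω i = u} = 2 ∧ #{i | ω i = v} = 2} =
      (Fintype.card α).choose 2 * ((Fintype.card α - 2).choose 2 *
        (Fintype.card β - 2) ^ (Fintype.card α - 4)) := by
  rw [card_eq_sum_card_fiberwise (f := fun ω => ({i | ω i = u} : Finset α))
    (t := powersetCard 2 univ) fun ω hω => by simp_all [mem_powersetCard],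
    sum_const_nat (m := ?_), card_powersetCard, card_univ]
  intro s hs
  rw [mem_powersetCard] at hs
  rw [filter_filter, card_eq_sum_card_fiberwise (f := fun ω => ({i | ω i = v} : Finset α))
    (t := powersetCard 2 sᶜ) ?maps, sum_const_nat (m := ?_), card_powersetCard, card_compl, hs.2]
  case maps =>
    intro ω hω
    simp only [coe_filter, Set.mem_ofPred_eq, mem_univ, true_and, mem_coe, mem_powersetCard] at hω ⊢
    obtain ⟨⟨-, hv⟩, rfl⟩ := hω
    refine ⟨fun i hi => ?_, hv⟩
    simp only [mem_filter, mem_univ, true_and, mem_compl] at hi ⊢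
    rw [hi]
    exact huv.symm
  intro s' hs'
  rw [mem_powersetCard, subset_compl_iff_disjoint_left] at hs'
  calc #{ω ∈ {ω : α → β | (#{i | ω i = u} = 2 ∧ #{i | ω i = v} = 2) ∧
        ({i | ω i = u} : Finset α) = s} | ({i | ω i = v} : Finset α) = s'}
      = #{ω : α → β | ({i | ω i = u} : Finset α) = s ∧ ({i | ω i = v} : Finset α) = s'} := by
        rw [filter_filter]
        refine congrArg card <| filter_congr fun ω _ => ?_
        exact ⟨fun h => ⟨h.1.2, h.2⟩, fun h => ⟨⟨⟨h.1 ▸ hs.2, h.2 ▸ hs'.2⟩, h.1⟩, h.2⟩⟩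
    _ = _ := by rw [card_filter_fiber_eq_and_fiber_eq huv hs'.1, hs.2, hs'.2, Nat.sub_sub]

def doublyOccupied (ω : α → β) : Finset β := {u | #{i | ω i = u} = 2}

theorem card_doublyOccupied_le_multiplyOccupied {N k : ℕ} (ω : Fin k → Fin N) :
    #(doublyOccupied ω) ≤ multiplyOccupied N k ω :=
  card_le_card fun u hu => by
    simp only [doublyOccupied, mem_filter, mem_univ, true_and] at hu ⊢
    exact hu.ge

theorem sum_card_doublyOccupied :
    ∑ ω : α → β, #(doublyOccupied ω) =
      Fintype.card β *
        ((Fintype.card α).choose 2 * (Fintype.card β - 1) ^ (Fintype.card α - 2)) := by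
  simp only [doublyOccupied, card_filter]
  rw [sum_comm]
  simp only [← card_filter, card_filter_card_fiber_eq_two, sum_const, card_univ, smul_eq_mul]

theorem sum_card_doublyOccupied_sq :
    ∑ ω : α → β, #(doublyOccupied ω) ^ 2 =
      Fintype.card β * ((Fintype.card α).choose 2 * (Fintype.card β - 1) ^ (Fintype.card α - 2) +
        (Fintype.card β - 1) * ((Fintype.card α).choose 2 * ((Fintype.card α - 2).choose 2 *
          (Fintype.card β - 2) ^ (Fintype.card α - 4)))) := by
  have hsq (ω : α → β) : #(doublyOccupied ω) ^ 2 =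
      ∑ u, ∑ v, if #{i | ω i = u} = 2 ∧ #{i | ω i = v} = 2 then 1 else 0 := by
    rw [sq, ← card_product, doublyOccupied, ← filter_product, card_filter, univ_product_univ,
      Fintype.sum_prod_type]
  simp only [hsq]
  rw [sum_comm, ← smul_eq_mul, ← card_univ, ← sum_const]
  refine sum_congr rfl fun u _ => ?_
  rw [sum_comm, ← add_sum_erase _ _ (mem_univ u), ← card_filter]
  simp only [and_self, card_filter_card_fiber_eq_two]
  congr 1
  rw [sum_congr rfl fun v hv => ?_, sum_const, card_erase_of_mem (mem_univ u), card_univ,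
    smul_eq_mul]
  rw [← card_filter, card_filter_card_fiber_eq_two_and_card_fiber_eq_two (ne_of_mem_erase hv).symm]

theorem sum_sq_card_doublyOccupied_mul_le (h : Fintype.card α ≤ Fintype.card β) :
    (∑ ω : α → β, #(doublyOccupied ω) ^ 2) * Fintype.card (α → β) ≤
      (∑ ω : α → β, #(doublyOccupied ω)) * Fintype.card (α → β) +
        (∑ ω : α → β, #(doublyOccupied ω)) ^ 2 := by
  rw [sum_card_doublyOccupied_sq, sum_card_doublyOccupied, Fintype.card_fun, mul_add, add_mul]
  refine Nat.add_le_add_left ?_ _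
  convert Nat.mul_le_mul_left (Fintype.card β) (sub_one_mul_pair_count_mul_pow_le h) using 1 <;>
    ring

theorem sum_card_doublyOccupied_eq (hα : 2 ≤ Fintype.card α) (hβ : 0 < Fintype.card β) :
    ∑ ω : α → β, (#(doublyOccupied ω) : ℝ) = Fintype.card (α → β) *
      ((Fintype.card α : ℝ) * (Fintype.card α - 1) / 2 *
        (1 - (Fintype.card β : ℝ)⁻¹) ^ (Fintype.card α - 2) / Fintype.card β) := by
  rw [← Nat.cast_sum, sum_card_doublyOccupied, Fintype.card_fun]
  obtain ⟨m, hm⟩ : ∃ m, Fintype.card α = m + 2 := ⟨Fintype.card α - 2, by omega⟩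
  have hN : (Fintype.card β : ℝ) ≠ 0 := by positivity
  rw [hm, Nat.add_sub_cancel]
  push_cast [Nat.cast_choose_two, Nat.cast_sub (Nat.one_le_of_lt hβ)]
  rw [show 1 - (Fintype.card β : ℝ)⁻¹ = (Fintype.card β - 1) / Fintype.card β by field_simp,
    div_pow]
  field_simp
  ring

end Occupancy

section Moments

variable {Ω : Type*} [Fintype Ω]

theorem sq_mul_card_filter_lt_sq_le (f : Ω → ℝ) {μ t : ℝ}
    (hμ : ∑ ω, f ω = Fintype.card Ω * μ) (ht : t ≤ μ) :
    (μ - t) ^ 2 * (#{ω | f ω < t} : ℝ) ^ 2 ≤ #{ω | t ≤ f ω} * ∑ ω, (f ω - μ) ^ 2 := by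
  have hbalance : ∑ ω ∈ {ω | t ≤ f ω}, (f ω - μ) = ∑ ω ∈ {ω | f ω < t}, (μ - f ω) := by
    have htotal : ∑ ω, (f ω - μ) = 0 := by
      rw [sum_sub_distrib, hμ, sum_const, card_univ, nsmul_eq_mul, sub_self]
    rw [← sum_filter_add_sum_filter_not univ (fun ω => t ≤ f ω)] at htotal
    simp only [not_le] at htotal
    rw [eq_neg_of_add_eq_zero_left htotal, ← sum_neg_distrib]
    simp
  have hbelow : (μ - t) * #{ω | f ω < t} ≤ ∑ ω ∈ {ω | f ω < t}, (μ - f ω) := by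
    rw [mul_comm, ← nsmul_eq_mul]
    exact card_nsmul_le_sum _ _ _ fun ω hω => by linarith [(mem_filter.1 hω).2]
  calc (μ - t) ^ 2 * (#{ω | f ω < t} : ℝ) ^ 2 = ((μ - t) * #{ω | f ω < t}) ^ 2 := by ring
    _ ≤ (∑ ω ∈ {ω | t ≤ f ω}, (f ω - μ)) ^ 2 := by
        rw [hbalance]
        exact pow_le_pow_left₀ (mul_nonneg (sub_nonneg.2 ht) (Nat.cast_nonneg _)) hbelow 2
    _ ≤ #{ω | t ≤ f ω} * ∑ ω ∈ {ω | t ≤ f ω}, (f ω - μ) ^ 2 := sq_sum_le_card_mul_sum_sq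
    _ ≤ #{ω | t ≤ f ω} * ∑ ω, (f ω - μ) ^ 2 := by
        gcongr
        exact subset_univ _

theorem sum_sub_sq_le_of_sum_sq_mul_le (f : Ω → ℝ) {μ : ℝ}
    (hμ : ∑ ω, f ω = Fintype.card Ω * μ)
    (h : (∑ ω, f ω ^ 2) * Fintype.card Ω ≤ (∑ ω, f ω) * Fintype.card Ω + (∑ ω, f ω) ^ 2) :
    ∑ ω, (f ω - μ) ^ 2 ≤ Fintype.card Ω * μ := by
  rcases isEmpty_or_nonempty Ω with hΩ | hΩ
  · simp
  have hn : (0 : ℝ) < Fintype.card Ω := Nat.cast_pos.2 Fintype.card_pos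
  have hvar : ∑ ω, (f ω - μ) ^ 2 = ∑ ω, f ω ^ 2 - Fintype.card Ω * μ ^ 2 := by
    simp only [sub_sq, sum_add_distrib, sum_sub_distrib, ← sum_mul, ← mul_sum, hμ, sum_const,
      card_univ, nsmul_eq_mul]
    ring
  rw [hvar, hμ] at *
  nlinarith

theorem card_le_seventy_three_mul_card_filter_le (f : Ω → ℝ) {μ t : ℝ}
    (hμ : ∑ ω, f ω = Fintype.card Ω * μ) (hvar : ∑ ω, (f ω - μ) ^ 2 ≤ Fintype.card Ω * μ)
    (ht : t ≤ μ) (hμ0 : 0 < μ) (hμt : μ ≤ 70 * (μ - t) ^ 2) :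
    Fintype.card Ω ≤ 73 * #{ω | t ≤ f ω} := by
  have hcantelli := sq_mul_card_filter_lt_sq_le f hμ ht
  have hsplit : (#{ω | f ω < t} : ℝ) = Fintype.card Ω - #{ω | t ≤ f ω} := by
    rw [eq_sub_iff_add_eq, ← Nat.cast_add, ← card_univ,
      ← card_filter_add_card_filter_not (s := univ) (fun ω => f ω < t)]
    simp [add_comm]
  rw [hsplit] at hcantelli
  have hA : (0 : ℝ) ≤ #{ω | t ≤ f ω} := Nat.cast_nonneg _
  have hn : (0 : ℝ) ≤ Fintype.card Ω := Nat.cast_nonneg _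
  have hd : 0 < (μ - t) ^ 2 := by nlinarith
  have hsq : (Fintype.card Ω - #{ω | t ≤ f ω} : ℝ) ^ 2 ≤ 70 * #{ω | t ≤ f ω} * Fintype.card Ω := by
    refine le_of_mul_le_mul_left ?_ hd
    calc _ ≤ #{ω | t ≤ f ω} * (Fintype.card Ω * μ) :=
          hcantelli.trans (mul_le_mul_of_nonneg_left hvar hA)
      _ ≤ _ := by nlinarith [mul_le_mul_of_nonneg_left hμt (mul_nonneg hA hn)]
  by_contra! h
  have h' : (73 * #{ω | t ≤ f ω} : ℝ) < Fintype.card Ω := by exact_mod_cast h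
  nlinarith

end Moments

theorem one_sub_div_le_one_sub_inv_pow (N m : ℕ) : 1 - (m : ℝ) / N ≤ (1 - (N : ℝ)⁻¹) ^ m := by
  have := one_add_mul_le_pow (a := -(N : ℝ)⁻¹) (by linarith [Nat.cast_inv_le_one (α := ℝ) N]) m
  rwa [← sub_eq_add_neg, mul_neg, ← div_eq_mul_inv, ← sub_eq_add_neg] at this

theorem exp_neg_one_le_one_sub_inv_pow {N m : ℕ} (hm : m < N) :
    exp (-1) ≤ (1 - (N : ℝ)⁻¹) ^ m := by
  rcases Nat.eq_zero_or_pos m with rfl | hm0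
  · simp
  have hN : (1 : ℝ) < N := by exact_mod_cast (show 1 < N by omega)
  have hpos : 0 < 1 - (N : ℝ)⁻¹ := sub_pos.2 (inv_lt_one_of_one_lt₀ hN)
  have hlog : -1 / ((N : ℝ) - 1) ≤ log (1 - (N : ℝ)⁻¹) := by
    convert one_sub_inv_le_log_of_pos hpos using 1
    have : (N : ℝ) - 1 ≠ 0 := by linarith
    field_simp
    ring
  have hmN : (m : ℝ) ≤ N - 1 := by
    have : (m : ℝ) + 1 ≤ N := by exact_mod_cast hm
    linarith
  rw [← exp_log hpos, ← exp_nat_mul]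
  refine exp_le_exp.2 ?_
  calc (-1 : ℝ) ≤ m * (-1 / ((N : ℝ) - 1)) := by
        rw [mul_div_assoc', le_div_iff₀ (by linarith)]; linarith
    _ ≤ _ := mul_le_mul_of_nonneg_left hlog m.cast_nonneg

theorem le_seventy_mul_sq_of_le_mul {μ t θ : ℝ} (hθ : 0 < θ) (ht : t ≤ (1 - θ) * μ)
    (hμ : 1 ≤ 70 * θ ^ 2 * μ) : μ ≤ 70 * (μ - t) ^ 2 := by
  have hμ0 : 0 < μ := by nlinarith
  have hd : θ * μ ≤ μ - t := by linarith
  nlinarith [pow_le_pow_left₀ (by positivity) hd 2]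

theorem threshold_le_mean {K n a μ : ℝ} (hK : 1000 ≤ K) (hn : 0 < n) (hnK : n ≤ K ^ 2)
    (ha₁ : 1 - K / n ≤ a) (ha₂ : exp (-1) ≤ a) (hμ : μ = K * (K - 1) / 2 * a / n) :
    0 < μ ∧ K ^ 2 / (6 * n) ≤ μ ∧ μ ≤ 70 * (μ - K ^ 2 / (6 * n)) ^ 2 := by
  have hexp : (0.3678 : ℝ) ≤ exp (-1) := by
    rw [exp_neg, le_inv_comm₀ (by norm_num) (exp_pos 1)]
    linarith [exp_one_lt_d9]
  obtain ⟨θ, hθ, ht, hμθ⟩ : ∃ θ : ℝ, 0 < θ ∧ K ^ 2 / 6 ≤ (1 - θ) * (K * (K - 1) / 2 * a) ∧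
      n ≤ 70 * θ ^ 2 * (K * (K - 1) / 2 * a) := by
    have hKK : 0 ≤ K * (K - 1) := by nlinarith
    rcases le_or_gt (8 * K) n with hKn | hKn
    · have ha : 7 / 8 ≤ a := by
        have : K / n ≤ 1 / 8 := by rw [div_le_div_iff₀ hn (by norm_num)]; linarith
        linarith
      refine ⟨3 / 5, by norm_num, ?_, ?_⟩ <;> nlinarith [mul_le_mul_of_nonneg_left ha hKK]
    · refine ⟨1 / 11, by norm_num, ?_, ?_⟩ <;>
        nlinarith [mul_le_mul_of_nonneg_left (hexp.trans ha₂) hKK]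
  have ht' : K ^ 2 / (6 * n) ≤ (1 - θ) * μ := by
    rw [hμ, ← div_div, mul_div_assoc']
    exact div_le_div_of_nonneg_right ht hn.le
  have hμθ' : 1 ≤ 70 * θ ^ 2 * μ := by
    rwa [hμ, mul_div_assoc', one_le_div hn]
  exact ⟨by nlinarith, ht'.trans (by nlinarith), le_seventy_mul_sq_of_le_mul hθ ht' hμθ'⟩

/-- For `√N ≤ k ≤ N` and `N` large, `k` i.i.d. uniform labels on `[N]` produce at
least `k²/(6N)` multiply occupied sites with probability at least `1/73`. -/
theorem stmt_3 :
    ∃ N₀ : ℕ, ∀ N k : ℕ, N₀ ≤ N → Real.sqrt N ≤ (k : ℝ) → k ≤ N →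
      (1 : ℝ) / 73 ≤
        ((Finset.univ.filter fun ω : Fin k → Fin N =>
            (k : ℝ) ^ 2 / (6 * N) ≤ (multiplyOccupied N k ω : ℝ)).card : ℝ)
          / (N : ℝ) ^ k := by
  refine ⟨10 ^ 6, fun N k hN hNk hkN => ?_⟩
  have hk : (1000 : ℝ) ≤ k := by
    refine le_trans ?_ hNk
    rw [le_sqrt (by norm_num) (Nat.cast_nonneg _)]
    exact_mod_cast (by norm_num : 1000 ^ 2 = 10 ^ 6) ▸ hN
  have hk2 : 2 ≤ k := by exact_mod_cast (by linarith : (2 : ℝ) ≤ k)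
  have hN0 : (0 : ℝ) < N := by exact_mod_cast (by omega : 0 < N)
  have hNk2 : (N : ℝ) ≤ k ^ 2 :=
    (sq_sqrt (Nat.cast_nonneg N)).symm.le.trans (pow_le_pow_left₀ (sqrt_nonneg _) hNk 2)
  set Y : (Fin k → Fin N) → ℝ := fun ω => #(doublyOccupied ω) with hY
  set μ : ℝ := k * (k - 1) / 2 * (1 - (N : ℝ)⁻¹) ^ (k - 2) / N
  have hmean : ∑ ω, Y ω = Fintype.card (Fin k → Fin N) * μ := by
    simpa using sum_card_doublyOccupied_eq (α := Fin k) (β := Fin N) (by simpa)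
      (by rw [Fintype.card_fin]; omega)
  have hvar : ∑ ω, (Y ω - μ) ^ 2 ≤ Fintype.card (Fin k → Fin N) * μ := by
    refine sum_sub_sq_le_of_sum_sq_mul_le Y hmean ?_
    simp only [hY]
    exact_mod_cast sum_sq_card_doublyOccupied_mul_le (α := Fin k) (β := Fin N) (by simpa)
  have hbernoulli : 1 - (k : ℝ) / N ≤ (1 - (N : ℝ)⁻¹) ^ (k - 2) := by
    refine le_trans ?_ (one_sub_div_le_one_sub_inv_pow N (k - 2))
    gcongr
    exact_mod_cast Nat.sub_le k 2
  obtain ⟨hμ, ht, hμt⟩ := threshold_le_mean hk hN0 hNk2 hbernoulli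
    (exp_neg_one_le_one_sub_inv_pow (by omega)) rfl
  have hcount := card_le_seventy_three_mul_card_filter_le Y hmean hvar ht hμ hμt
  rw [Fintype.card_fun, Fintype.card_fin, Fintype.card_fin] at hcount
  rw [div_le_div_iff₀ (by norm_num) (by positivity), one_mul, mul_comm]
  calc (N : ℝ) ^ k ≤ 73 * #{ω | (k : ℝ) ^ 2 / (6 * N) ≤ Y ω} := by exact_mod_cast hcount
    _ ≤ _ := by
      gcongr with ω
      exact Nat.cast_le.2 (card_doublyOccupied_le_multiplyOccupied ω)
end
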